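/- Let C be a binary linear code of length n whose extended code C_ex is transitive invariant and all of whose codeword weights are divisible by 4. Then for even w, L_w(C) = ((n+1-w)/(n+1)) · L_w(C_ex). -/

import Mathlib

open Finset

/-- Support of a binary vector: the set of nonzero coordinates. -/
def supp {n : ℕ} (v : Fin n → ZMod 2) : Finset (Fin n) :=
  Finset.univ.filter fun i => v i ≠ 0

/-- Hamming weight. -/
def wt {n : ℕ} (v : Fin n → ZMod 2) : ℕ := (supp v).card

/-- A nonzero codeword of `D` is a zero neighbor (minimal codeword) if no nonzero
codeword of `D` has support strictly contained in its support. -/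
def IsZeroNeighbor {n : ℕ} (D : Set (Fin n → ZMod 2)) (v : Fin n → ZMod 2) : Prop :=
  v ∈ D ∧ v ≠ 0 ∧ ∀ v' ∈ D, v' ≠ 0 → ¬ supp v' ⊂ supp v

/-- `v` is decomposable in `D` if it is the sum of two nonzero codewords of `D`
with disjoint supports. -/
def Decomposable {n : ℕ} (D : Set (Fin n → ZMod 2)) (v : Fin n → ZMod 2) : Prop :=
  ∃ v1 v2, v1 ∈ D ∧ v2 ∈ D ∧ v1 ≠ 0 ∧ v2 ≠ 0 ∧
    Disjoint (supp v1) (supp v2) ∧ v = v1 + v2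

/-- Extension of a vector by its overall parity bit. -/
def extVec {n : ℕ} (v : Fin n → ZMod 2) : Fin (n + 1) → ZMod 2 :=
  Fin.snoc v (∑ i, v i)

/-- The extended code. -/
def extCode {n : ℕ} (C : Submodule (ZMod 2) (Fin n → ZMod 2)) :
    Set (Fin (n + 1) → ZMod 2) :=
  extVec '' (C : Set (Fin n → ZMod 2))

/-- An even-weight codeword is only-odd-decomposable if it is decomposable and in every
decomposition into nonzero disjoint-support codewords both parts have odd weight. -/
def OnlyOddDecomposable {n : ℕ} (C : Submodule (ZMod 2) (Fin n → ZMod 2))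
    (v : Fin n → ZMod 2) : Prop :=
  Even (wt v) ∧ Decomposable (C : Set (Fin n → ZMod 2)) v ∧
    ∀ v1 v2, v1 ∈ C → v2 ∈ C → v1 ≠ 0 → v2 ≠ 0 →
      Disjoint (supp v1) (supp v2) → v = v1 + v2 → Odd (wt v1) ∧ Odd (wt v2)

/-- `L_w(D)`: the number of zero neighbors of weight `w` in `D`. -/
noncomputable def Lw {n : ℕ} (D : Set (Fin n → ZMod 2)) (w : ℕ) : ℕ :=
  {v : Fin n → ZMod 2 | IsZeroNeighbor D v ∧ wt v = w}.ncard

/-- `N_w(C)`: the number of only-odd-decomposable codewords of weight `w` in `C`. -/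
noncomputable def Nw {n : ℕ} (C : Submodule (ZMod 2) (Fin n → ZMod 2)) (w : ℕ) : ℕ :=
  {v : Fin n → ZMod 2 | v ∈ C ∧ OnlyOddDecomposable C v ∧ wt v = w}.ncard

/-- Action of a coordinate permutation on a vector. -/
def permVec {n : ℕ} (π : Equiv.Perm (Fin n)) (v : Fin n → ZMod 2) : Fin n → ZMod 2 :=
  v ∘ π.symm

/-- `π` is an automorphism of the code `D`. -/
def IsAut {n : ℕ} (D : Set (Fin n → ZMod 2)) (π : Equiv.Perm (Fin n)) : Prop :=
  permVec π '' D = D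

/-- The even weight subcode of `C`, as a set. -/
def evenSub {n : ℕ} (C : Submodule (ZMod 2) (Fin n → ZMod 2)) :
    Set (Fin n → ZMod 2) :=
  {v : Fin n → ZMod 2 | v ∈ C ∧ Even (wt v)}

/-!
A zero neighbor `u` of `C_ex` with `u (Fin.last n) = 0` is `extVec v` for an even-weight `v ∈ C`,
and `u` is a zero neighbor of `C_ex` exactly when `v` is one of `C`. The one nontrivial direction:
a codeword `v' ∈ C` of odd weight with `supp v' ⊂ supp v` would give
`wt v = wt v' + wt (v + v')`, impossible because the weights in `C` are `0` or `3 mod 4`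
(those of `C_ex` being `0 mod 4`). So `L_w(C)` counts the weight-`w` zero neighbors of `C_ex`
vanishing at the last coordinate. By transitivity every coordinate vanishes on equally many of
them, and double counting the pairs (coordinate, zero neighbor vanishing there) gives
`(n + 1) L_w(C) + w L_w(C_ex) = (n + 1) L_w(C_ex)`.
-/

lemma ZMod.eq_one_of_ne_zero_of_two {x : ZMod 2} (hx : x ≠ 0) : x = 1 := by
  decide +revert

section Vectors

variable {n : ℕ}

lemma mem_supp {v : Fin n → ZMod 2} {i : Fin n} : i ∈ supp v ↔ v i ≠ 0 := by
  simp [supp]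

lemma sum_eq_wt (v : Fin n → ZMod 2) : ∑ i, v i = (wt v : ZMod 2) := by
  have hone : ∀ i ∈ supp v, v i = 1 := fun i hi => ZMod.eq_one_of_ne_zero_of_two (mem_supp.1 hi)
  rw [← Finset.sum_filter_ne_zero, ← supp.eq_def, Finset.sum_congr rfl hone]
  simp [wt]

lemma wt_add_of_supp_subset {v v' : Fin n → ZMod 2} (h : supp v' ⊆ supp v) :
    wt (v + v') + wt v' = wt v := by
  have hsupp : supp (v + v') = supp v \ supp v' := by
    ext i
    have hi := @h i
    simp only [mem_supp, Finset.mem_sdiff, Pi.add_apply] at hi ⊢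
    generalize v i = x, v' i = y at hi ⊢
    decide +revert
  rw [wt, wt, wt, hsupp, Finset.card_sdiff_add_card_eq_card h]

end Vectors

section Extension

variable {n : ℕ}

lemma extVec_castSucc (v : Fin n → ZMod 2) (i : Fin n) : extVec v i.castSucc = v i :=
  Fin.snoc_castSucc ..

lemma extVec_last (v : Fin n → ZMod 2) : extVec v (Fin.last n) = (wt v : ZMod 2) := by
  rw [← sum_eq_wt]
  exact Fin.snoc_last ..

lemma extVec_last_eq_zero_iff {v : Fin n → ZMod 2} :
    extVec v (Fin.last n) = 0 ↔ Even (wt v) := by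
  rw [extVec_last, ZMod.natCast_eq_zero_iff_even]

lemma extVec_injective : Function.Injective (extVec (n := n)) := fun v v' h =>
  funext fun i => by simpa only [extVec_castSucc] using congrFun h i.castSucc

lemma extVec_zero : extVec (0 : Fin n → ZMod 2) = 0 := by
  funext j
  induction j using Fin.lastCases <;> simp [extVec_castSucc, extVec_last, wt, supp]

lemma extVec_eq_zero {v : Fin n → ZMod 2} : extVec v = 0 ↔ v = 0 :=
  extVec_injective.eq_iff' extVec_zero

lemma supp_extVec_of_even {v : Fin n → ZMod 2} (h : Even (wt v)) :
    supp (extVec v) = (supp v).map Fin.castSuccEmb := by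
  ext j
  induction j using Fin.lastCases with
  | last => simp [mem_supp, extVec_last_eq_zero_iff.2 h, Fin.castSucc_ne_last]
  | cast i => simp [mem_supp, extVec_castSucc]

lemma wt_extVec (v : Fin n → ZMod 2) :
    wt (extVec v) = wt v + if Even (wt v) then 0 else 1 := by
  have hsplit : wt (extVec v) = wt v + if extVec v (Fin.last n) ≠ 0 then 1 else 0 := by
    simp only [wt, supp, Finset.card_filter, Fin.sum_univ_castSucc, extVec_castSucc]
  simp only [hsplit, ne_eq, extVec_last_eq_zero_iff, ite_not]

end Extension

section Automorphisms

variable {n : ℕ}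

lemma permVec_injective (π : Equiv.Perm (Fin n)) : Function.Injective (permVec π) :=
  fun v v' h => funext fun i => by simpa [permVec] using congrFun h (π i)

lemma permVec_eq_zero {π : Equiv.Perm (Fin n)} {v : Fin n → ZMod 2} :
    permVec π v = 0 ↔ v = 0 :=
  (permVec_injective π).eq_iff' rfl

lemma supp_permVec (π : Equiv.Perm (Fin n)) (v : Fin n → ZMod 2) :
    supp (permVec π v) = (supp v).map π.toEmbedding := by
  ext i
  simp [mem_supp, permVec, Finset.mem_map_equiv]

lemma wt_permVec (π : Equiv.Perm (Fin n)) (v : Fin n → ZMod 2) : wt (permVec π v) = wt v := by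
  rw [wt, supp_permVec, Finset.card_map, wt]

lemma IsZeroNeighbor.permVec {D : Set (Fin n → ZMod 2)} {π : Equiv.Perm (Fin n)}
    (hπ : IsAut D π) {u : Fin n → ZMod 2} (hu : IsZeroNeighbor D u) :
    IsZeroNeighbor D (permVec π u) := by
  obtain ⟨hmem, hne, hmin⟩ := hu
  refine ⟨hπ ▸ Set.mem_image_of_mem _ hmem, permVec_eq_zero.not.2 hne, ?_⟩
  rw [← hπ]
  rintro _ ⟨x, hx, rfl⟩ hxne hss
  rw [supp_permVec, supp_permVec, Finset.map_ssubset_map] at hss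
  exact hmin x hx (permVec_eq_zero.not.1 hxne) hss

end Automorphisms

section ExtendedCode

variable {n : ℕ} {C : Submodule (ZMod 2) (Fin n → ZMod 2)}

lemma extVec_mem_extCode {v : Fin n → ZMod 2} : extVec v ∈ extCode C ↔ v ∈ C :=
  extVec_injective.mem_set_image

lemma wt_mod_four_of_mem (h4 : ∀ u ∈ extCode C, 4 ∣ wt u) {v : Fin n → ZMod 2} (hv : v ∈ C) :
    wt v % 4 = 0 ∨ wt v % 4 = 3 := by
  have h := h4 _ (extVec_mem_extCode.2 hv)
  rw [wt_extVec] at h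
  split_ifs at h <;> omega

lemma isZeroNeighbor_extVec_of_even {v : Fin n → ZMod 2} (hev : Even (wt v))
    (hv : IsZeroNeighbor (C : Set (Fin n → ZMod 2)) v) :
    IsZeroNeighbor (extCode C) (extVec v) := by
  obtain ⟨hmem, hne, hmin⟩ := hv
  refine ⟨extVec_mem_extCode.2 hmem, extVec_eq_zero.not.2 hne, ?_⟩
  rintro _ ⟨v', hv', rfl⟩ hne' hss
  have hev' : Even (wt v') := by
    by_contra hodd
    have hlast : Fin.last n ∈ supp (extVec v') := by
      simpa [mem_supp, extVec_last_eq_zero_iff] using hodd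
    simpa [supp_extVec_of_even hev, Fin.castSucc_ne_last] using hss.subset hlast
  rw [supp_extVec_of_even hev', supp_extVec_of_even hev, Finset.map_ssubset_map] at hss
  exact hmin v' hv' (extVec_eq_zero.not.1 hne') hss

lemma isZeroNeighbor_of_extVec (h4 : ∀ u ∈ extCode C, 4 ∣ wt u) {v : Fin n → ZMod 2}
    (hev : Even (wt v)) (hv : IsZeroNeighbor (extCode C) (extVec v)) :
    IsZeroNeighbor (C : Set (Fin n → ZMod 2)) v := by
  obtain ⟨hmem, hne, hmin⟩ := hv
  have hvC := extVec_mem_extCode.1 hmem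
  refine ⟨hvC, extVec_eq_zero.not.1 hne, fun v' hv' hne' hss => ?_⟩
  by_cases hev' : Even (wt v')
  · refine hmin _ (extVec_mem_extCode.2 hv') (extVec_eq_zero.not.2 hne') ?_
    rw [supp_extVec_of_even hev', supp_extVec_of_even hev, Finset.map_ssubset_map]
    exact hss
  · have hsum := wt_add_of_supp_subset hss.subset
    have := wt_mod_four_of_mem h4 hvC
    have := wt_mod_four_of_mem h4 hv'
    have := wt_mod_four_of_mem h4 (C.add_mem hvC hv')
    rw [Nat.even_iff] at hev hev'
    omega

lemma isZeroNeighbor_extVec_iff (h4 : ∀ u ∈ extCode C, 4 ∣ wt u) {v : Fin n → ZMod 2}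
    (hev : Even (wt v)) :
    IsZeroNeighbor (extCode C) (extVec v) ↔ IsZeroNeighbor (C : Set (Fin n → ZMod 2)) v :=
  ⟨isZeroNeighbor_of_extVec h4 hev, isZeroNeighbor_extVec_of_even hev⟩

end ExtendedCode

section Counting

variable {m : ℕ} (T : Finset (Fin m → ZMod 2))

lemma sum_card_filter_apply_eq_zero_add_sum_wt :
    ∑ i, #{u ∈ T | u i = 0} + ∑ u ∈ T, wt u = m * #T := by
  have hdouble : ∑ i, #{u ∈ T | u i ≠ 0} = ∑ u ∈ T, wt u :=
    Finset.sum_card_bipartiteAbove_eq_sum_card_bipartiteBelow (s := Finset.univ) (t := T)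
      (fun i u => u i ≠ 0)
  rw [← hdouble, ← Finset.sum_add_distrib]
  simp [Finset.card_filter_add_card_filter_not]

variable {T}

lemma card_filter_apply_eq_zero_le_of_mapsTo {π : Equiv.Perm (Fin m)}
    (hπ : ∀ u ∈ T, permVec π u ∈ T) (i : Fin m) :
    #{u ∈ T | u i = 0} ≤ #{u ∈ T | u (π i) = 0} :=
  Finset.card_le_card_of_injOn (permVec π)
    (fun u hu => by
      simp only [Finset.coe_filter, Set.mem_ofPred_eq] at hu ⊢
      simpa [permVec] using And.imp_left (hπ u) hu)
    (permVec_injective π).injOn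

lemma card_filter_apply_eq_zero_eq_of_transitive
    (htrans : ∀ i j, ∃ π : Equiv.Perm (Fin m), (∀ u ∈ T, permVec π u ∈ T) ∧ π i = j)
    (i j : Fin m) : #{u ∈ T | u i = 0} = #{u ∈ T | u j = 0} := by
  obtain ⟨π, hπ, rfl⟩ := htrans i j
  obtain ⟨σ, hσ, hσi⟩ := htrans (π i) i
  refine le_antisymm (card_filter_apply_eq_zero_le_of_mapsTo hπ i) ?_
  simpa [hσi] using card_filter_apply_eq_zero_le_of_mapsTo hσ (π i)

lemma card_mul_card_filter_apply_eq_zero_add_card_mul {w : ℕ} (hT : ∀ u ∈ T, wt u = w)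
    (htrans : ∀ i j, ∃ π : Equiv.Perm (Fin m), (∀ u ∈ T, permVec π u ∈ T) ∧ π i = j)
    (j : Fin m) : m * #{u ∈ T | u j = 0} + #T * w = m * #T := by
  have h := sum_card_filter_apply_eq_zero_add_sum_wt T
  rwa [Finset.sum_congr rfl fun i _ => card_filter_apply_eq_zero_eq_of_transitive htrans i j,
    Finset.sum_congr rfl hT, Finset.sum_const, Finset.sum_const, Finset.card_univ,
    Fintype.card_fin, smul_eq_mul, smul_eq_mul] at h

end Counting

section ZeroNeighbors

variable {n : ℕ}

open Classical in
noncomputable def zeroNeighbors (D : Set (Fin n → ZMod 2)) (w : ℕ) : Finset (Fin n → ZMod 2) :=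
  {u | IsZeroNeighbor D u ∧ wt u = w}

lemma mem_zeroNeighbors {D : Set (Fin n → ZMod 2)} {w : ℕ} {u : Fin n → ZMod 2} :
    u ∈ zeroNeighbors D w ↔ IsZeroNeighbor D u ∧ wt u = w := by
  simp [zeroNeighbors]

lemma Lw_eq_card_zeroNeighbors (D : Set (Fin n → ZMod 2)) (w : ℕ) :
    Lw D w = #(zeroNeighbors D w) := by
  rw [Lw, ← Set.ncard_coe_finset]
  congr 1
  ext u
  exact mem_zeroNeighbors.symm

lemma permVec_mem_zeroNeighbors {D : Set (Fin n → ZMod 2)} {π : Equiv.Perm (Fin n)}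
    (hπ : IsAut D π) (w : ℕ) {u : Fin n → ZMod 2} (hu : u ∈ zeroNeighbors D w) :
    permVec π u ∈ zeroNeighbors D w := by
  rw [mem_zeroNeighbors, wt_permVec] at *
  exact ⟨hu.1.permVec hπ, hu.2⟩

lemma card_filter_zeroNeighbors_extCode_last_eq_zero
    {C : Submodule (ZMod 2) (Fin n → ZMod 2)} (h4 : ∀ u ∈ extCode C, 4 ∣ wt u)
    {w : ℕ} (hw : Even w) :
    #{u ∈ zeroNeighbors (extCode C) w | u (Fin.last n) = 0} =
      Lw (C : Set (Fin n → ZMod 2)) w := by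
  rw [Lw_eq_card_zeroNeighbors,
    ← Finset.card_image_of_injective (zeroNeighbors (C : Set (Fin n → ZMod 2)) w) extVec_injective]
  refine congrArg Finset.card (Finset.ext fun u => ?_)
  simp only [Finset.mem_filter, Finset.mem_image, mem_zeroNeighbors]
  constructor
  · rintro ⟨⟨hzn, hwt⟩, hlast⟩
    obtain ⟨v, -, rfl⟩ := hzn.1
    have hev := extVec_last_eq_zero_iff.1 hlast
    rw [wt_extVec, if_pos hev, add_zero] at hwt
    exact ⟨v, ⟨(isZeroNeighbor_extVec_iff h4 hev).1 hzn, hwt⟩, rfl⟩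
  · rintro ⟨v, ⟨hzn, rfl⟩, rfl⟩
    refine ⟨⟨(isZeroNeighbor_extVec_iff h4 hw).2 hzn, ?_⟩, extVec_last_eq_zero_iff.2 hw⟩
    rw [wt_extVec, if_pos hw, add_zero]

end ZeroNeighbors

theorem lwd_even_from_extended_doubly_even {n : ℕ}
    (C : Submodule (ZMod 2) (Fin n → ZMod 2))
    (htrans : ∀ i j : Fin (n + 1), ∃ π : Equiv.Perm (Fin (n + 1)),
      IsAut (extCode C) π ∧ π i = j)
    (h4 : ∀ u ∈ extCode C, 4 ∣ wt u)
    (w : ℕ) (hw : Even w) :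
    (Lw (C : Set (Fin n → ZMod 2)) w : ℚ) =
      (((n : ℚ) + 1 - w) / (n + 1)) * Lw (extCode C) w := by
  have hcount := card_mul_card_filter_apply_eq_zero_add_card_mul
    (T := zeroNeighbors (extCode C) w) (fun _ hu => (mem_zeroNeighbors.1 hu).2)
    (fun i j => (htrans i j).imp fun _ ⟨hπ, hπij⟩ =>
      ⟨fun _ => permVec_mem_zeroNeighbors hπ w, hπij⟩) (Fin.last n)
  rw [card_filter_zeroNeighbors_extCode_last_eq_zero h4 hw,
    ← Lw_eq_card_zeroNeighbors] at hcount
  have hcount' : ((n + 1 : ℕ) : ℚ) * Lw (C : Set (Fin n → ZMod 2)) w + Lw (extCode C) w * w =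
      (n + 1 : ℕ) * Lw (extCode C) w := mod_cast hcount
  push_cast at hcount'
  field_simp
  linarith
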